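/- arXiv:2102.06735 — 2 statements merged into one kernel-verified Lean document; each statement's English description precedes it below -/
import Mathlib

section
/- In the setting of the previous lemma, if additionally every retained corrupted row satisfies v ≤ k (which is guaranteed when the filtering algorithm removes the ε-fraction of rows with largest loss-layer gradient norm ‖δ_i‖, since at most εm clean rows exist above any corrupted row's rank), then ‖μ(G) - μ(N)‖ ≤ Ck·(4ε - 4ε²)/(1-ε) = 4εCk. -/
/-- Robust gradient estimation for supervision corruption: when every retained corrupted
row has loss-layer gradient norm at most `k` (as guaranteed by filtering out the ε-fraction
with largest loss-layer gradient norm), the filtered mean is within `4εCk` of the clean mean. -/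
theorem robust_gradient_estimation_supervision
    {d q m : ℕ} (hm : 0 < m) (ε C k : ℝ) (hε : 0 < ε) (hε' : ε < 1 / 2)
    (c : ℕ) (hc : (c : ℝ) = ε * m)
    (α δ : Fin m → EuclideanSpace ℝ (Fin q))
    (W : Fin m → EuclideanSpace ℝ (Fin q) →L[ℝ] EuclideanSpace ℝ (Fin d))
    (hW : ∀ i, ‖W i‖ ≤ C)
    (hk : ∀ i, ‖α i‖ ≤ k)
    (S : Finset (Fin m)) (hScard : (S.card : ℝ) ≤ ε * m)
    (g g' : Fin m → EuclideanSpace ℝ (Fin d))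
    (hgclean : ∀ i, g i = W i (α i))
    (hgood : ∀ i ∉ S, g' i = W i (α i))
    (hbad : ∀ i ∈ S, g' i = W i (δ i))
    (R : Finset (Fin m)) (hRcard : R.card = m - c)
    (hv : ∀ i ∈ R, i ∈ S → ‖δ i‖ ≤ k) :
    ‖(1 / (m : ℝ)) • ∑ i, g i - (1 / ((m : ℝ) - c)) • ∑ i ∈ R, g' i‖
      ≤ 4 * ε * C * k := by
  have hm' : (0 : ℝ) < m := by exact_mod_cast hm
  have hC0 : 0 ≤ C := le_trans (norm_nonneg _) (hW ⟨0, hm⟩)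
  have hk0 : 0 ≤ k := le_trans (norm_nonneg _) (hk ⟨0, hm⟩)
  have hck0 : 0 ≤ C * k := mul_nonneg hC0 hk0
  have hcm : (c : ℝ) < m := by
    rw [hc]; nlinarith
  have hcmn : c ≤ m := by exact_mod_cast hcm.le
  have hn : (0 : ℝ) < (m : ℝ) - c := by linarith
  -- norms of clean rows
  have hg_norm : ∀ i, ‖g i‖ ≤ C * k := by
    intro i
    rw [hgclean i]
    calc ‖W i (α i)‖ ≤ ‖W i‖ * ‖α i‖ := (W i).le_opNorm _
      _ ≤ C * k := mul_le_mul (hW i) (hk i) (norm_nonneg _) hC0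
  -- sum bound helper
  have hsum : ∀ (T : Finset (Fin m)) (f : Fin m → EuclideanSpace ℝ (Fin d)),
      (∀ i ∈ T, ‖f i‖ ≤ C * k) → ‖∑ i ∈ T, f i‖ ≤ T.card * (C * k) := by
    intro T f hf
    calc ‖∑ i ∈ T, f i‖ ≤ ∑ i ∈ T, (C * k) := norm_sum_le_of_le T hf
      _ = T.card * (C * k) := by rw [Finset.sum_const, nsmul_eq_mul]
  set A : Finset (Fin m) := R \ S with hA
  set B : Finset (Fin m) := R ∩ S with hB
  have hAB : Disjoint A B := Finset.sdiff_disjoint.mono_right Finset.inter_subset_right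
  have hABR : A ∪ B = R := Finset.sdiff_union_inter R S
  -- decompose sums
  have hR' : ∑ i ∈ R, g' i = ∑ i ∈ A, g i + ∑ i ∈ B, g' i := by
    rw [← hABR, Finset.sum_union hAB]
    congr 1
    apply Finset.sum_congr rfl
    intro i hi
    rw [hgood i (Finset.mem_sdiff.mp hi).2, hgclean i]
  have huniv : ∑ i, g i = ∑ i ∈ A, g i + ∑ i ∈ Finset.univ \ A, g i := by
    rw [add_comm, Finset.sum_sdiff (Finset.subset_univ A)]
  -- key decomposition
  have key : (1 / (m : ℝ)) • ∑ i, g i - (1 / ((m : ℝ) - c)) • ∑ i ∈ R, g' i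
      = (1 / (m : ℝ) - 1 / ((m : ℝ) - c)) • ∑ i ∈ A, g i
        + (1 / (m : ℝ)) • ∑ i ∈ Finset.univ \ A, g i
        - (1 / ((m : ℝ) - c)) • ∑ i ∈ B, g' i := by
    rw [hR', huniv]
    module
  rw [key]
  -- cardinalities
  have haRS : A.card + B.card = R.card := by
    rw [← hABR, Finset.card_union_of_disjoint hAB]
  have hRm : (R.card : ℝ) = (m : ℝ) - c := by
    rw [hRcard]; push_cast [Nat.cast_sub hcmn]; ring
  have hAm : A.card ≤ m := (Finset.card_le_card (Finset.subset_univ A)).trans_eq (by simp)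
  have hBc : (B.card : ℝ) ≤ ε * m :=
    le_trans (by exact_mod_cast Finset.card_le_card (Finset.inter_subset_right : B ⊆ S)) hScard
  have hcompl : ((Finset.univ \ A).card : ℝ) = (m : ℝ) - A.card := by
    have huc : (Finset.univ : Finset (Fin m)).card = m := by simp
    rw [Finset.card_sdiff_of_subset (Finset.subset_univ A), huc, Nat.cast_sub hAm]
  -- bound each piece
  have t1 : ‖(1 / (m : ℝ) - 1 / ((m : ℝ) - c)) • ∑ i ∈ A, g i‖
      ≤ (1 / ((m : ℝ) - c) - 1 / m) * (A.card * (C * k)) := by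
    rw [norm_smul, Real.norm_eq_abs]
    have habs : |1 / (m : ℝ) - 1 / ((m : ℝ) - c)| = 1 / ((m : ℝ) - c) - 1 / m := by
      rw [abs_sub_comm, abs_of_nonneg]
      have : 1 / (m : ℝ) ≤ 1 / ((m : ℝ) - c) := by
        apply one_div_le_one_div_of_le hn; linarith
      linarith
    rw [habs]
    apply mul_le_mul_of_nonneg_left (hsum A g fun i _ => hg_norm i)
    have : 1 / (m : ℝ) ≤ 1 / ((m : ℝ) - c) := by
      apply one_div_le_one_div_of_le hn; linarith
    linarith
  have t2 : ‖(1 / (m : ℝ)) • ∑ i ∈ Finset.univ \ A, g i‖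
      ≤ (1 / m) * (((m : ℝ) - A.card) * (C * k)) := by
    rw [norm_smul, Real.norm_eq_abs, abs_of_nonneg (by positivity)]
    apply mul_le_mul_of_nonneg_left _ (by positivity)
    have := hsum (Finset.univ \ A) g fun i _ => hg_norm i
    rwa [hcompl] at this
  have t3 : ‖(1 / ((m : ℝ) - c)) • ∑ i ∈ B, g' i‖
      ≤ (1 / ((m : ℝ) - c)) * (B.card * (C * k)) := by
    rw [norm_smul, Real.norm_eq_abs, abs_of_nonneg (by positivity)]
    apply mul_le_mul_of_nonneg_left _ (by positivity)
    apply hsum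
    intro i hi
    have hiR : i ∈ R := Finset.mem_of_mem_inter_left hi
    have hiS : i ∈ S := Finset.mem_of_mem_inter_right hi
    rw [hbad i hiS]
    calc ‖W i (δ i)‖ ≤ ‖W i‖ * ‖δ i‖ := (W i).le_opNorm _
      _ ≤ C * k := mul_le_mul (hW i) (hv i hiR hiS) (norm_nonneg _) hC0
  have tri : ‖(1 / (m : ℝ) - 1 / ((m : ℝ) - c)) • ∑ i ∈ A, g i
        + (1 / (m : ℝ)) • ∑ i ∈ Finset.univ \ A, g i
        - (1 / ((m : ℝ) - c)) • ∑ i ∈ B, g' i‖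
      ≤ ‖(1 / (m : ℝ) - 1 / ((m : ℝ) - c)) • ∑ i ∈ A, g i‖
        + ‖(1 / (m : ℝ)) • ∑ i ∈ Finset.univ \ A, g i‖
        + ‖(1 / ((m : ℝ) - c)) • ∑ i ∈ B, g' i‖ :=
    le_trans (norm_sub_le _ _) (by gcongr; exact norm_add_le _ _)
  refine le_trans tri (le_trans (add_le_add (add_le_add t1 t2) t3) ?_)
  -- final arithmetic
  have hab : (A.card : ℝ) + B.card = (m : ℝ) - c := by
    rw [← hRm]; exact_mod_cast haRS
  set a : ℝ := (A.card : ℝ)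
  set b : ℝ := (B.card : ℝ)
  have ha0 : 0 ≤ a := Nat.cast_nonneg _
  have hb0 : 0 ≤ b := Nat.cast_nonneg _
  have hgoal : (1 / ((m : ℝ) - c) - 1 / m) * (a * (C * k))
      + (1 / m) * (((m : ℝ) - a) * (C * k))
      + (1 / ((m : ℝ) - c)) * (b * (C * k)) = (2 * ((c : ℝ) + b) / m) * (C * k) := by
    have ha : a = (m : ℝ) - c - b := by linarith
    rw [ha]
    field_simp
    ring
  rw [hgoal]
  have hfac : 2 * ((c : ℝ) + b) / m ≤ 4 * ε := by
    rw [div_le_iff₀ hm']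
    rw [hc] at *
    nlinarith
  calc (2 * ((c : ℝ) + b) / m) * (C * k) ≤ (4 * ε) * (C * k) :=
        mul_le_mul_of_nonneg_right hfac hck0
    _ = 4 * ε * C * k := by ring
end

section
/- Let α, β ∈ ℝ^q be probability vectors with α_k ≥ β_k for a fixed index k, and let y be the one-hot vector at k. Then ‖α - y‖² - ‖β - y‖² = (q-1)·(Var_{i≠k}(α) - Var_{i≠k}(β)) - (q/(q-1))·(α_k - β_k)·(2 - α_k - β_k), where Var_{i≠k}(p) = (1/(q-1))Σ_{i≠k}p_i² - ((1-p_k)/(q-1))². -/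
/-- Exact identity underlying Lemma 2: the difference of squared distances to the one-hot
vector equals a variance difference minus a true-class term. -/
theorem mse_difference_variance_identity
    {q : ℕ} (hq : 2 ≤ q) (k : Fin q)
    (α β : Fin q → ℝ)
    (hα0 : ∀ i, 0 ≤ α i) (hα1 : ∑ i, α i = 1)
    (hβ0 : ∀ i, 0 ≤ β i) (hβ1 : ∑ i, β i = 1)
    (hk : β k ≤ α k)
    (y : Fin q → ℝ) (hy : y = fun i => if i = k then 1 else 0) :
    ∑ i, (α i - y i) ^ 2 - ∑ i, (β i - y i) ^ 2
      = ((q : ℝ) - 1) *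
          (((1 / ((q : ℝ) - 1)) * ∑ i ∈ Finset.univ.erase k, (α i) ^ 2
              - ((1 - α k) / ((q : ℝ) - 1)) ^ 2)
            - ((1 / ((q : ℝ) - 1)) * ∑ i ∈ Finset.univ.erase k, (β i) ^ 2
              - ((1 - β k) / ((q : ℝ) - 1)) ^ 2))
        - ((q : ℝ) / ((q : ℝ) - 1)) * ((α k - β k) * (2 - α k - β k)) := by
  subst hy
  have hq1 : ((q : ℝ) - 1) ≠ 0 := by
    have : (2 : ℝ) ≤ (q : ℝ) := by exact_mod_cast hq
    linarith
  have hsplit : ∀ p : Fin q → ℝ,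
      ∑ i, (p i - if i = k then (1:ℝ) else 0) ^ 2
        = (p k - 1) ^ 2 + ∑ i ∈ Finset.univ.erase k, (p i) ^ 2 := by
    intro p
    rw [← Finset.add_sum_erase _ _ (Finset.mem_univ k)]
    simp only [if_pos rfl]
    congr 1
    refine Finset.sum_congr rfl fun i hi => ?_
    rw [if_neg (Finset.ne_of_mem_erase hi)]
    ring
  rw [hsplit α, hsplit β]
  field_simp
  ring
end
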